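/- arXiv:2501.00521 — 2 statements merged into one kernel-verified Lean document; each statement's English description precedes it below -/
import Mathlib

section
/- Let (W, S) be a Coxeter system, I₁, …, I_r ⊆ S, and t a reflection of W. Define, for each i, L_i = {wW_i : ℓ((tw)^{I_i}) > ℓ(w^{I_i})}, R_i = {wW_i : ℓ((tw)^{I_i}) < ℓ(w^{I_i})}, F_i = {wW_i : ℓ((tw)^{I_i}) = ℓ(w^{I_i})}. Then no edge (wW_1, …, wW_r) of the (I₁,…,I_r; W, S)-hypergraph contains both a vertex in some L_i and a vertex in some R_j. That is, F = ∪_i F_i is a vertex cut separating L = ∪_i L_i from R = ∪_i R_i. -/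
variable {B W : Type*} [Group W] {M : CoxeterMatrix B}

/-- The standard parabolic subgroup `W_I`. -/
def parab (cs : CoxeterSystem M W) (I : Set B) : Subgroup W :=
  Subgroup.closure (cs.simple '' I)

/-- `ℓ(w^I)`: the minimal length of an element in the coset `x = wW_I`. -/
noncomputable def minLenQ (cs : CoxeterSystem M W) (I : Set B) (x : W ⧸ parab cs I) : ℕ :=
  sInf (cs.length '' {u : W | (QuotientGroup.mk u : W ⧸ parab cs I) = x})

/-! If `ℓ(tw) < ℓ(w)`, then `ℓ((tw)^I) ≤ ℓ(w^I)` for every `I`. Indeed, write `w = π (η ++ α)` with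
`η` a reduced word for `w^I` and `α` a word in `I`. By the strong exchange condition `tw` is obtained
by deleting one letter: if it lies in `α`, then `twW_I = wW_I`; if it lies in `η`, the coset `twW_I`
has a representative of length `< ℓ(w^I)`. Applying this to `w` when `ℓ(tw) < ℓ(w)`, and to `tw`
otherwise, the differences `ℓ((tw)^{I_i}) - ℓ(w^{I_i})` can never take both signs.

The strong exchange condition is needed for words that are not reduced, and comes from Tits' sign
action of `W` on `W × ZMod 2`: the parity of the number of occurrences of `t` in the left inversion
sequence of a word depends only on the product `w` of the word, and it is odd when `ℓ(tw) < ℓ(w)`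
(otherwise `t` would be a left inversion of `tw`, read off a reduced word). -/

namespace CoxeterSystem

open List

variable (cs : CoxeterSystem M W)

theorem leftInvSeq_alternatingWord_take_eq_drop (i j : B) :
    (cs.leftInvSeq (alternatingWord i j (2 * M i j))).take (M i j)
      = (cs.leftInvSeq (alternatingWord i j (2 * M i j))).drop (M i j) := by
  apply List.ext_getElem (by simp; omega)
  intro k h₁ _
  simp only [length_take, length_leftInvSeq, length_alternatingWord] at h₁
  rw [getElem_take, getElem_drop, getElem_leftInvSeq_alternatingWord _ _ _ _ _ (by omega),
    getElem_leftInvSeq_alternatingWord _ _ _ _ _ (by omega), prod_alternatingWord_eq_mul_pow,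
    prod_alternatingWord_eq_mul_pow]
  have hk : ¬ Even (2 * k + 1) := by simp
  have hmk : ¬ Even (2 * (M i j + k) + 1) := by simp
  rw [if_neg hk, if_neg hmk, show (2 * k + 1) / 2 = k by omega,
    show (2 * (M i j + k) + 1) / 2 = M i j + k by omega, pow_add, simple_mul_simple_pow',
    one_mul]

section SignAction

variable [DecidableEq W]

theorem even_count_leftInvSeq_alternatingWord (i j : B) (t : W) :
    Even ((cs.leftInvSeq (alternatingWord i j (2 * M i j))).count t) := by
  rw [← take_append_drop (M i j) (cs.leftInvSeq (alternatingWord i j (2 * M i j))), count_append,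
    leftInvSeq_alternatingWord_take_eq_drop]
  exact ⟨_, rfl⟩

def signAction (i : B) : Function.End (W × ZMod 2) :=
  fun p => (cs.simple i * p.1 * cs.simple i, p.2 + if p.1 = cs.simple i then 1 else 0)

theorem prod_map_signAction_apply (ω : List B) (t : W) (ε : ZMod 2) :
    (ω.map cs.signAction).prod (t, ε) =
      (cs.wordProd ω * t * (cs.wordProd ω)⁻¹,
        ε + ((cs.leftInvSeq ω).count (cs.wordProd ω * t * (cs.wordProd ω)⁻¹) : ZMod 2)) := by
  induction ω with
  | nil => simp; rfl
  | cons i ω ih =>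
    set u := cs.wordProd ω * t * (cs.wordProd ω)⁻¹
    have hconj : cs.wordProd (i :: ω) * t * (cs.wordProd (i :: ω))⁻¹
        = cs.simple i * u * cs.simple i := by
      simp only [u, wordProd_cons, mul_inv_rev, inv_simple, mul_assoc]
    have hcount : ((cs.leftInvSeq ω).map (MulAut.conj (cs.simple i))).count
        (cs.simple i * u * cs.simple i) = (cs.leftInvSeq ω).count u := by
      rw [show cs.simple i * u * cs.simple i = MulAut.conj (cs.simple i) u by simp]
      exact count_map_of_injective _ _ (MulAut.conj (cs.simple i)).injective u
    have hfix : cs.simple i = cs.simple i * u * cs.simple i ↔ u = cs.simple i := by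
      constructor <;> intro h
      · simpa [mul_assoc] using (congrArg (fun x => cs.simple i * x * cs.simple i) h).symm
      · simp [h]
    change cs.signAction i ((ω.map cs.signAction).prod (t, ε)) = _
    rw [ih, hconj]
    simp only [signAction, leftInvSeq, count_cons, hcount, beq_iff_eq, hfix]
    split_ifs <;> simp only [Prod.mk.injEq, true_and] <;> push_cast <;> ring

theorem prod_map_signAction_alternatingWord (i j : B) (m : ℕ) :
    ((alternatingWord i j (2 * m)).map cs.signAction).prod
      = (cs.signAction i * cs.signAction j) ^ m := by
  induction m with
  | zero => simp [alternatingWord]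
  | succ m ih =>
    have h : alternatingWord i j (2 * (m + 1)) = i :: j :: alternatingWord i j (2 * m) := by
      rw [show 2 * (m + 1) = 2 * m + 1 + 1 by ring, alternatingWord_succ', alternatingWord_succ']
      simp
    rw [h, map_cons, map_cons, prod_cons, prod_cons, ih, pow_succ', mul_assoc]

theorem isLiftable_signAction : M.IsLiftable cs.signAction := by
  intro i j
  have hπ : cs.wordProd (alternatingWord i j (2 * M i j)) = 1 := by
    rw [prod_alternatingWord_eq_mul_pow, if_pos (even_two_mul _), one_mul,
      Nat.mul_div_cancel_left _ two_pos, simple_mul_simple_pow]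
  rw [← prod_map_signAction_alternatingWord]
  funext ⟨t, ε⟩
  rw [prod_map_signAction_apply, hπ, one_mul, inv_one, mul_one,
    (ZMod.natCast_eq_zero_iff_even).mpr (cs.even_count_leftInvSeq_alternatingWord i j t), add_zero]
  rfl

noncomputable def signHom : W →* Function.End (W × ZMod 2) :=
  cs.lift ⟨cs.signAction, cs.isLiftable_signAction⟩

theorem signHom_wordProd (ω : List B) :
    cs.signHom (cs.wordProd ω) = (ω.map cs.signAction).prod := by
  simp [signHom, wordProd, map_list_prod, Function.comp_def]

noncomputable def inversionParity (w t : W) : ZMod 2 := (cs.signHom w (w⁻¹ * t * w, 0)).2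

theorem inversionParity_wordProd (ω : List B) (t : W) :
    cs.inversionParity (cs.wordProd ω) t = ((cs.leftInvSeq ω).count t : ZMod 2) := by
  simp [inversionParity, signHom_wordProd, prod_map_signAction_apply, mul_assoc]

theorem signHom_apply (w x : W) (ε : ZMod 2) :
    cs.signHom w (x, ε) = (w * x * w⁻¹, ε + cs.inversionParity w (w * x * w⁻¹)) := by
  obtain ⟨ω, rfl⟩ := cs.wordProd_surjective w
  rw [signHom_wordProd, prod_map_signAction_apply, inversionParity_wordProd]

theorem inversionParity_mul (a b t : W) :
    cs.inversionParity (a * b) t = cs.inversionParity a t + cs.inversionParity b (a⁻¹ * t * a) := by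
  have h : cs.inversionParity (a * b) t
      = (cs.signHom a (cs.signHom b ((a * b)⁻¹ * t * (a * b), 0))).2 := by
    rw [inversionParity, map_mul]; rfl
  rw [h, signHom_apply, signHom_apply]
  simp only [zero_add, mul_inv_rev]
  rw [show b * (b⁻¹ * a⁻¹ * t * (a * b)) * b⁻¹ = a⁻¹ * t * a by group,
    show a * (a⁻¹ * t * a) * a⁻¹ = t by group, add_comm]

theorem inversionParity_one (t : W) : cs.inversionParity 1 t = 0 := by
  simpa using cs.inversionParity_wordProd [] t

theorem inversionParity_simple (i : B) : cs.inversionParity (cs.simple i) (cs.simple i) = 1 := by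
  simpa using cs.inversionParity_wordProd [i] (cs.simple i)

theorem inversionParity_self {t : W} (ht : cs.IsReflection t) : cs.inversionParity t t = 1 := by
  obtain ⟨v, i, rfl⟩ := ht
  have hcancel := cs.inversionParity_mul v v⁻¹ (v * cs.simple i * v⁻¹)
  rw [mul_inv_cancel, inversionParity_one] at hcancel
  have hs : v⁻¹ * (v * cs.simple i * v⁻¹) * v = cs.simple i := by group
  have hs' : (v * cs.simple i)⁻¹ * (v * cs.simple i * v⁻¹) * (v * cs.simple i) = cs.simple i := by
    group
  rw [hs] at hcancel
  rw [inversionParity_mul, inversionParity_mul, hs, hs', inversionParity_simple]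
  linear_combination -hcancel

theorem inversionParity_reflection_mul {t : W} (ht : cs.IsReflection t) (w : W) :
    cs.inversionParity (t * w) t = cs.inversionParity w t + 1 := by
  rw [inversionParity_mul, cs.inversionParity_self ht, inv_mul_cancel, one_mul, add_comm]

theorem mem_leftInvSeq_of_inversionParity_eq_one {ω : List B} {t : W}
    (h : cs.inversionParity (cs.wordProd ω) t = 1) : t ∈ cs.leftInvSeq ω := by
  rw [inversionParity_wordProd] at h
  refine count_pos_iff.mp (Nat.pos_of_ne_zero fun h0 => ?_)
  simp [h0] at h

theorem inversionParity_eq_one_of_isLeftInversion {w t : W} (h : cs.IsLeftInversion w t) :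
    cs.inversionParity w t = 1 := by
  by_contra hne
  have hzero : cs.inversionParity w t = 0 := by
    generalize cs.inversionParity w t = x at hne
    revert x; decide
  obtain ⟨ω, hω, hπ⟩ := cs.exists_isReduced (t * w)
  have hmem : t ∈ cs.leftInvSeq ω := cs.mem_leftInvSeq_of_inversionParity_eq_one (by
    rw [← hπ, cs.inversionParity_reflection_mul h.1, hzero, zero_add])
  have hlt := (cs.isLeftInversion_of_mem_leftInvSeq hω hmem).2
  rw [← hπ, ← mul_assoc, h.1.mul_self, one_mul] at hlt
  exact absurd h.2 (by omega)

end SignAction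

theorem exists_mul_wordProd_eq_eraseIdx_of_isLeftInversion {ω : List B} {t : W}
    (h : cs.IsLeftInversion (cs.wordProd ω) t) :
    ∃ k < ω.length, t * cs.wordProd ω = cs.wordProd (ω.eraseIdx k) := by
  classical
  obtain ⟨k, hk, rfl⟩ := mem_iff_getElem.mp
    (cs.mem_leftInvSeq_of_inversionParity_eq_one (cs.inversionParity_eq_one_of_isLeftInversion h))
  refine ⟨k, by simpa using hk, ?_⟩
  rw [← getD_eq_getElem _ 1 hk, getD_leftInvSeq_mul_wordProd]

variable {I : Set B}

theorem wordProd_mem_parab {α : List B} (hα : ∀ b ∈ α, b ∈ I) : cs.wordProd α ∈ parab cs I :=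
  Subgroup.list_prod_mem _ <| forall_mem_map.mpr fun b hb =>
    Subgroup.subset_closure (Set.mem_image_of_mem cs.simple (hα b hb))

theorem exists_wordProd_eq_of_mem_parab {a : W} (ha : a ∈ parab cs I) :
    ∃ α : List B, (∀ b ∈ α, b ∈ I) ∧ cs.wordProd α = a := by
  induction ha using Subgroup.closure_induction with
  | mem x hx =>
    obtain ⟨b, hb, rfl⟩ := hx
    exact ⟨[b], by simpa using hb, wordProd_singleton cs b⟩
  | one => exact ⟨[], by simp, wordProd_nil cs⟩
  | mul x y _ _ ihx ihy =>
    obtain ⟨α, hα, rfl⟩ := ihx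
    obtain ⟨β, hβ, rfl⟩ := ihy
    exact ⟨α ++ β, by simpa [or_imp, forall_and] using ⟨hα, hβ⟩, wordProd_append cs α β⟩
  | inv x _ ihx =>
    obtain ⟨α, hα, rfl⟩ := ihx
    exact ⟨α.reverse, by simpa using hα, wordProd_reverse cs α⟩

theorem minLenQ_le_length {x : W ⧸ parab cs I} {u : W} (hu : QuotientGroup.mk u = x) :
    minLenQ cs I x ≤ cs.length u :=
  Nat.sInf_le ⟨u, hu, rfl⟩

theorem exists_length_eq_minLenQ (x : W ⧸ parab cs I) :
    ∃ u : W, QuotientGroup.mk u = x ∧ cs.length u = minLenQ cs I x := by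
  obtain ⟨w, rfl⟩ := QuotientGroup.mk_surjective x
  have hne : (cs.length '' {u : W | (QuotientGroup.mk u : W ⧸ parab cs I) = w}).Nonempty :=
    ⟨cs.length w, w, rfl, rfl⟩
  exact Nat.sInf_mem hne

theorem minLenQ_mk_wordProd_append_le (η : List B) {α : List B} (hα : ∀ b ∈ α, b ∈ I) :
    minLenQ cs I (QuotientGroup.mk (cs.wordProd (η ++ α))) ≤ η.length := by
  rw [wordProd_append, QuotientGroup.mk_mul_of_mem _ (cs.wordProd_mem_parab hα)]
  exact (cs.minLenQ_le_length rfl).trans (cs.length_wordProd_le η)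

theorem minLenQ_mul_le_of_isLeftInversion (I : Set B) {t w : W} (h : cs.IsLeftInversion w t) :
    minLenQ cs I (QuotientGroup.mk (t * w)) ≤ minLenQ cs I (QuotientGroup.mk w) := by
  obtain ⟨u, hu, hlen⟩ := cs.exists_length_eq_minLenQ (QuotientGroup.mk w : W ⧸ parab cs I)
  obtain ⟨α, hαI, hα⟩ := cs.exists_wordProd_eq_of_mem_parab (QuotientGroup.eq.mp hu)
  obtain ⟨η, hη, rfl⟩ := cs.exists_isReduced u
  have hw : w = cs.wordProd (η ++ α) := by rw [wordProd_append, hα, mul_inv_cancel_left]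
  subst hw
  rw [← hlen, hη]
  obtain ⟨k, -, htw⟩ := cs.exists_mul_wordProd_eq_eraseIdx_of_isLeftInversion h
  rw [htw]
  rcases lt_or_ge k η.length with hkη | hkη
  · rw [eraseIdx_append_of_lt_length hkη]
    exact (cs.minLenQ_mk_wordProd_append_le _ hαI).trans (eraseIdx_sublist η k).length_le
  · rw [eraseIdx_append_of_length_le hkη]
    exact cs.minLenQ_mk_wordProd_append_le η fun b hb => hαI b ((eraseIdx_sublist α _).subset hb)

end CoxeterSystem

/-- For a reflection `t`, with `L_i, R_i, F_i` the sets of cosets `wW_{I_i}` on which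
`ℓ((tw)^{I_i})` is respectively greater than, less than, or equal to `ℓ(w^{I_i})`, no edge
`(wW_{I_1}, …, wW_{I_r})` of the `(I₁,…,I_r; W, S)`-hypergraph contains both a vertex in some
`L_i` and a vertex in some `R_j`; i.e. `F = ⋃ i, F_i` is a vertex cut separating
`L = ⋃ i, L_i` from `R = ⋃ i, R_i`. -/
theorem no_edge_meets_both_sides (cs : CoxeterSystem M W) (r : ℕ) (Is : Fin r → Set B)
    (t : W) (ht : cs.IsReflection t) (w : W) (i j : Fin r) :
    ¬(minLenQ cs (Is i) (QuotientGroup.mk (t * w)) > minLenQ cs (Is i) (QuotientGroup.mk w) ∧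
      minLenQ cs (Is j) (QuotientGroup.mk (t * w)) < minLenQ cs (Is j) (QuotientGroup.mk w)) := by
  rintro ⟨hi, hj⟩
  rcases (ht.length_mul_right_ne w).lt_or_gt with hlt | hgt
  · exact (cs.minLenQ_mul_le_of_isLeftInversion (Is i) ⟨ht, hlt⟩).not_gt hi
  · have hinv : cs.IsLeftInversion (t * w) t := ⟨ht, by rwa [← mul_assoc, ht.mul_self, one_mul]⟩
    have := cs.minLenQ_mul_le_of_isLeftInversion (Is j) hinv
    rw [← mul_assoc, ht.mul_self, one_mul] at this
    exact this.not_gt hj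
end

section
/- Let (W, S) be a finite Coxeter system and I ⊆ S. Then there exists a percolating sequence of W/W_I starting from the singleton {W_I}: a finite sequence J_0 = {W_I}, J_1, …, J_N = W/W_I of subsets of W/W_I such that each J_{i+1} equals J_i⁺(t_i) or J_i⁻(t_i) for some reflection t_i. -/
variable {B W : Type*} [Group W] {M : CoxeterMatrix B}

/-- The left-folding map `t⁺` on `W`: `t⁺(w) = tw` if `ℓ(tw) < ℓ(w)`, else `w`. -/
noncomputable def foldWplus (cs : CoxeterSystem M W) (t w : W) : W :=
  if cs.length (t * w) < cs.length w then t * w else w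

/-- The right-folding map `t⁻` on `W`: `t⁻(w) = tw` if `ℓ(tw) > ℓ(w)`, else `w`. -/
noncomputable def foldWminus (cs : CoxeterSystem M W) (t w : W) : W :=
  if cs.length (t * w) > cs.length w then t * w else w

/-- The left-folding map on cosets. -/
noncomputable def foldQplus (cs : CoxeterSystem M W) (I : Set B) (t : W)
    (x : W ⧸ parab cs I) : W ⧸ parab cs I :=
  QuotientGroup.mk (foldWplus cs t x.out)

/-- The right-folding map on cosets. -/
noncomputable def foldQminus (cs : CoxeterSystem M W) (I : Set B) (t : W)
    (x : W ⧸ parab cs I) : W ⧸ parab cs I :=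
  QuotientGroup.mk (foldWminus cs t x.out)

/-- `J⁺(t)`. -/
noncomputable def Jplus (cs : CoxeterSystem M W) (I : Set B) (t : W)
    (J : Set (W ⧸ parab cs I)) : Set (W ⧸ parab cs I) :=
  {x | foldQplus cs I t x ∈ J}

/-- `J⁻(t)`. -/
noncomputable def Jminus (cs : CoxeterSystem M W) (I : Set B) (t : W)
    (J : Set (W ⧸ parab cs I)) : Set (W ⧸ parab cs I) :=
  {x | foldQminus cs I t x ∈ J}

/-!
Let `λ(x)` (`minLength`) be the minimal length of a representative of the coset `x`. Folding by a simple
reflection `s` never increases `λ`, whichever representative of `x` the fold reads, and every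
coset other than `W_I` is strictly lowered by the fold of a left descent of its minimal
representative. As `W/W_I` is finite, a potential argument gives simple folds `f₀, …, f_{N-1}`
whose composite sends every coset to `W_I`, and the preimages of `{W_I}` under the partial
composites `f₀ ∘ ⋯ ∘ f_{i-1}` form the percolating sequence.

That folds do not increase `λ` rests on `ℓ(uh) = ℓ(u) + ℓ(h)` for `u` minimal in `uW_I` and
`h ∈ W_I`, a consequence of the exchange condition. The exchange condition in turn comes from the
action of `W` on `W × ZMod 2` in which `s` conjugates the first coordinate and flips the second
exactly at `s`: it shows that the parity of the number of occurrences of `t` in the right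
inversion sequence of a word depends only on the product of the word.
-/

section Collapse

variable {X : Type*}

theorem exists_list_prod_eq_const [Finite X] (μ : X → ℕ) {F : Set (Function.End X)} (x₀ : X)
    (hle : ∀ f ∈ F, ∀ x, μ (f x) ≤ μ x) (hlt : ∀ x ≠ x₀, ∃ f ∈ F, μ (f x) < μ x) :
    ∃ fs : List (Function.End X), (∀ f ∈ fs, f ∈ F) ∧ ∀ x, fs.prod x = x₀ := by
  have := Fintype.ofFinite X
  suffices key : ∀ n (g : Function.End X), ∑ x, μ (g x) = n →
      ∃ fs : List (Function.End X), (∀ f ∈ fs, f ∈ F) ∧ ∀ x, (fs.prod * g) x = x₀ by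
    simpa using key _ 1 rfl
  intro n
  induction n using Nat.strong_induction_on with
  | _ n ih =>
  intro g hg
  by_cases hdone : ∀ x, g x = x₀
  · exact ⟨[], by simp, by simpa using hdone⟩
  push Not at hdone
  obtain ⟨y, hy⟩ := hdone
  obtain ⟨f, hf, hfy⟩ := hlt (g y) hy
  have hsum : ∑ x, μ ((f * g) x) < n :=
    hg ▸ Finset.sum_lt_sum (fun x _ => hle f hf (g x)) ⟨y, Finset.mem_univ _, hfy⟩
  obtain ⟨fs, hfs, hprod⟩ := ih _ hsum (f * g) rfl
  refine ⟨fs ++ [f], by simpa [or_imp, forall_and] using ⟨hfs, hf⟩, fun x => ?_⟩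
  simpa [mul_assoc] using hprod x

theorem exists_preimage_chain_eq_univ [Finite X] (μ : X → ℕ) {F : Set (Function.End X)} (x₀ : X)
    (hle : ∀ f ∈ F, ∀ x, μ (f x) ≤ μ x) (hlt : ∀ x ≠ x₀, ∃ f ∈ F, μ (f x) < μ x) :
    ∃ (N : ℕ) (Js : ℕ → Set X), Js 0 = {x₀} ∧ Js N = Set.univ ∧
      ∀ i < N, ∃ f ∈ F, Js (i + 1) = f ⁻¹' Js i := by
  obtain ⟨fs, hfs, hprod⟩ := exists_list_prod_eq_const μ x₀ hle hlt
  refine ⟨fs.length, fun i => {x | (fs.take i).prod x = x₀}, rfl, ?_,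
    fun i hi => ⟨fs[i], hfs _ (List.getElem_mem hi), ?_⟩⟩
  · simpa [Set.eq_univ_iff_forall] using hprod
  · ext x
    simp only [List.prod_take_succ _ _ hi]
    rfl

end Collapse

section FlipConj

variable {G : Type*} [Group G] [DecidableEq G]

/-- How a reflection `a` acts on `T × {±1}` in the combinatorial proof of the exchange condition
(Björner–Brenti, *Combinatorics of Coxeter Groups*, Ch. 1). -/
def flipConj (a : G) (x : G × ZMod 2) : G × ZMod 2 :=
  (a * x.1 * a⁻¹, x.2 + if x.1 = a then 1 else 0)

theorem flipConj_involutive {a : G} (ha : a * a = 1) : Function.Involutive (flipConj a) := by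
  rintro ⟨t, ε⟩
  have hconj : a * t * a⁻¹ = a ↔ t = a := by rw [mul_inv_eq_iff_eq_mul, mul_right_inj]
  refine Prod.ext ?_ ?_
  · simp only [flipConj]
    rw [show a * (a * t * a⁻¹) * a⁻¹ = (a * a) * t * (a * a)⁻¹ by group, ha]
    group
  · simp only [flipConj, hconj]
    split_ifs <;> simp [add_assoc, show (1 + 1 : ZMod 2) = 0 from rfl]

theorem iterate_flipConj_comp_apply {a b : G} (ha : a * a = 1) (hb : b * b = 1) (k : ℕ)
    (t : G) (ε : ZMod 2) :
    (flipConj a ∘ flipConj b)^[k] (t, ε) = ((a * b) ^ k * t * ((a * b) ^ k)⁻¹,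
      ε + ∑ r ∈ Finset.range (2 * k), if t = b * (a * b) ^ r then 1 else 0) := by
  have hb' : b⁻¹ = b := inv_eq_of_mul_eq_one_right hb
  have hflip : ∀ n : ℕ, ((a * b) ^ n)⁻¹ * b = b * (a * b) ^ n := by
    intro n
    have : b * (a * b) * b⁻¹ = (a * b)⁻¹ := by
      rw [mul_inv_rev, inv_eq_of_mul_eq_one_right ha, hb']
      simp [mul_assoc, hb]
    rw [← inv_pow, ← this, conj_pow]
    group
  induction k with
  | zero => simp
  | succ k ih =>
    set p := a * b with hp
    have hconj : ∀ c, p ^ k * t * (p ^ k)⁻¹ = c ↔ t = (p ^ k)⁻¹ * c * p ^ k := by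
      intro c
      constructor <;> rintro rfl <;> group
    have h₁ : p ^ k * t * (p ^ k)⁻¹ = b ↔ t = b * p ^ (2 * k) := by
      rw [hconj, hflip, mul_assoc, ← pow_add, two_mul]
    have h₂ : b * (p ^ k * t * (p ^ k)⁻¹) * b⁻¹ = a ↔ t = b * p ^ (2 * k + 1) := by
      have e : (p ^ k)⁻¹ * (b * p) * p ^ k = b * p ^ (2 * k + 1) := by
        rw [← mul_assoc, hflip, mul_assoc, mul_assoc, ← pow_succ', ← pow_add]
        ring_nf
      rw [mul_inv_eq_iff_eq_mul, ← eq_inv_mul_iff_mul_eq, hconj, hb', e]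
    rw [Function.iterate_succ_apply', ih]
    refine Prod.ext ?_ ?_
    · simp only [flipConj, Function.comp_apply]
      rw [pow_succ', mul_inv_rev]
      simp only [hp, mul_inv_rev, mul_assoc]
    · simp only [flipConj, Function.comp_apply, h₁, h₂]
      rw [show 2 * (k + 1) = 2 * k + 1 + 1 by ring, Finset.sum_range_succ, Finset.sum_range_succ]
      ring

theorem iterate_flipConj_comp_eq_id {a b : G} (ha : a * a = 1) (hb : b * b = 1) {m : ℕ}
    (hm : (a * b) ^ m = 1) : (flipConj a ∘ flipConj b)^[m] = id := by
  funext ⟨t, ε⟩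
  rw [iterate_flipConj_comp_apply ha hb, hm, two_mul, Finset.sum_range_add]
  -- `b * (a * b) ^ r` has period `m` in `r`, so every term of the sum occurs twice
  simp only [pow_add, hm, one_mul, ← two_mul, show (2 : ZMod 2) = 0 from rfl, zero_mul]
  simp

end FlipConj

theorem QuotientGroup.mk_mul_eq_mk_mul {G : Type*} [Group G] {H : Subgroup G} {u a : G}
    (h : (u : G ⧸ H) = a) (w : G) : ((w * u : G) : G ⧸ H) = (w * a : G) :=
  congrArg (w • ·) h

namespace CoxeterSystem

open scoped Classical

variable (cs : CoxeterSystem M W)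

local prefix:100 "s" => cs.simple
local prefix:100 "π" => cs.wordProd
local prefix:100 "ℓ" => cs.length
local prefix:100 "ris" => cs.rightInvSeq

theorem isLiftable_flipConj :
    M.IsLiftable fun i => (flipConj_involutive (cs.simple_mul_simple_self i)).toPerm := by
  intro i j
  ext1 x
  rw [Equiv.Perm.coe_pow, Equiv.Perm.coe_mul]
  exact congrFun (iterate_flipConj_comp_eq_id (cs.simple_mul_simple_self i)
    (cs.simple_mul_simple_self j) (cs.simple_mul_simple_pow i j)) x

noncomputable def flipRep : W →* Equiv.Perm (W × ZMod 2) :=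
  cs.lift ⟨_, cs.isLiftable_flipConj⟩

theorem flipRep_wordProd_apply (ω : List B) (t : W) (ε : ZMod 2) :
    cs.flipRep (π ω) (t, ε) = (π ω * t * (π ω)⁻¹, ε + (ris ω).count t) := by
  induction ω generalizing ε with
  | nil => simp
  | cons i ω ih =>
    have hcond : π ω * t * (π ω)⁻¹ = s i ↔ (π ω)⁻¹ * s i * π ω = t := by
      rw [mul_inv_eq_iff_eq_mul, ← eq_inv_mul_iff_mul_eq, eq_comm, mul_assoc]
    rw [wordProd_cons, map_mul, Equiv.Perm.mul_apply, ih, flipRep, lift_apply_simple]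
    refine Prod.ext ?_ ?_
    · simp only [Function.Involutive.coe_toPerm, flipConj, mul_inv_rev, mul_assoc]
    · simp only [Function.Involutive.coe_toPerm, flipConj, hcond, rightInvSeq, List.count_cons,
        beq_iff_eq]
      push_cast
      ring

theorem cast_count_rightInvSeq_eq_of_wordProd_eq {ω ω' : List B} (h : π ω = π ω') (t : W) :
    ((ris ω).count t : ZMod 2) = (ris ω').count t := by
  have h₀ := cs.flipRep_wordProd_apply ω t 0
  rw [h, cs.flipRep_wordProd_apply ω' t 0] at h₀
  simpa using (congrArg Prod.snd h₀).symm

theorem simple_mem_rightInvSeq_of_isRightDescent {ω : List B} {i : B}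
    (hi : cs.IsRightDescent (π ω) i) : s i ∈ ris ω := by
  obtain ⟨ω', hω', hprod⟩ := cs.exists_isReduced (π ω * s i)
  have hconcat : π (ω'.concat i) = π ω := by
    rw [wordProd_concat, ← hprod, simple_mul_simple_cancel_right]
  have hred : cs.IsReduced (ω'.concat i) := by
    have := (cs.length_mul_simple (π ω) i).resolve_left (by unfold IsRightDescent at hi; omega)
    rw [IsReduced, hconcat, List.length_concat, ← hω', ← hprod, this]
  have hcount : (ris (ω'.concat i)).count (s i) = 1 :=
    List.count_eq_one_of_mem hred.nodup_rightInvSeq (by rw [rightInvSeq_concat]; simp)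
  have hodd := cs.cast_count_rightInvSeq_eq_of_wordProd_eq hconcat (s i)
  rw [hcount] at hodd
  refine List.count_pos_iff.mp (Nat.pos_of_ne_zero fun h0 => ?_)
  rw [h0] at hodd
  exact absurd hodd (by decide)

theorem exists_wordProd_mul_simple_eq_eraseIdx {ω : List B} {i : B}
    (hi : cs.IsRightDescent (π ω) i) :
    ∃ j < ω.length, π ω * s i = π (ω.eraseIdx j) := by
  obtain ⟨j, hj, hget⟩ := List.mem_iff_getElem.mp (cs.simple_mem_rightInvSeq_of_isRightDescent hi)
  rw [length_rightInvSeq] at hj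
  refine ⟨j, hj, ?_⟩
  rw [← hget, ← List.getD_eq_getElem _ 1, wordProd_mul_getD_rightInvSeq]

theorem mem_parab_iff {I : Set B} {h : W} :
    h ∈ parab cs I ↔ ∃ ω : List B, (∀ j ∈ ω, j ∈ I) ∧ π ω = h := by
  constructor
  · intro hh
    induction hh using Subgroup.closure_induction with
    | mem x hx =>
      obtain ⟨j, hj, rfl⟩ := hx
      exact ⟨[j], by simpa using hj, by simp⟩
    | one => exact ⟨[], by simp, by simp⟩
    | mul x y _ _ ihx ihy =>
      obtain ⟨ω₁, h₁, rfl⟩ := ihx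
      obtain ⟨ω₂, h₂, rfl⟩ := ihy
      exact ⟨ω₁ ++ ω₂, by simpa [or_imp, forall_and] using ⟨h₁, h₂⟩, by rw [wordProd_append]⟩
    | inv x _ ihx =>
      obtain ⟨ω, hωI, rfl⟩ := ihx
      exact ⟨ω.reverse, by simpa using hωI, by rw [wordProd_reverse]⟩
  · rintro ⟨ω, hωI, rfl⟩
    induction ω with
    | nil => exact one_mem _
    | cons i ω ih =>
      simp only [List.mem_cons, forall_eq_or_imp] at hωI
      rw [wordProd_cons]
      exact mul_mem (Subgroup.subset_closure ⟨i, hωI.1, rfl⟩) (ih hωI.2)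

theorem exists_shortest_word_of_mem_parab {I : Set B} {h : W} (hh : h ∈ parab cs I) :
    ∃ ω : List B, (∀ j ∈ ω, j ∈ I) ∧ π ω = h ∧
      ∀ ω' : List B, (∀ j ∈ ω', j ∈ I) → π ω' = h → ω.length ≤ ω'.length := by
  have hex : ∃ n, ∃ ω : List B, (∀ j ∈ ω, j ∈ I) ∧ π ω = h ∧ ω.length = n :=
    let ⟨ω, hωI, hω⟩ := cs.mem_parab_iff.mp hh
    ⟨_, ω, hωI, hω, rfl⟩
  obtain ⟨ω, hωI, hω, hlen⟩ := Nat.find_spec hex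
  exact ⟨ω, hωI, hω, fun ω' hω'I hω' => hlen ▸ Nat.find_min' hex ⟨ω', hω'I, hω', rfl⟩⟩

variable (I : Set B)

noncomputable def minLength (x : W ⧸ parab cs I) : ℕ :=
  sInf (cs.length '' {w : W | (w : W ⧸ parab cs I) = x})

theorem minLength_le {x : W ⧸ parab cs I} {w : W} (hw : (w : W ⧸ parab cs I) = x) :
    cs.minLength I x ≤ ℓ w :=
  Nat.sInf_le ⟨w, hw, rfl⟩

theorem exists_length_eq_minLength (x : W ⧸ parab cs I) :
    ∃ u : W, (u : W ⧸ parab cs I) = x ∧ ℓ u = cs.minLength I x := by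
  have hne : (cs.length '' {w : W | (w : W ⧸ parab cs I) = x}).Nonempty :=
    ⟨_, x.out, QuotientGroup.out_eq' x, rfl⟩
  obtain ⟨u, hu, hlen⟩ := Nat.sInf_mem hne
  exact ⟨u, hu, hlen⟩

variable {I}

theorem length_mul_wordProd_of_minimal {u : W} (hu : ℓ u = cs.minLength I u) {ω : List B}
    (hωI : ∀ j ∈ ω, j ∈ I)
    (hω : ∀ ω' : List B, (∀ j ∈ ω', j ∈ I) → π ω' = π ω → ω.length ≤ ω'.length) :
    ℓ (u * π ω) = ℓ u + ω.length := by
  induction ω using List.reverseRecOn with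
  | nil => simp
  | append_singleton ω j ih =>
    simp only [List.mem_append, List.mem_singleton, or_imp, forall_and, forall_eq] at hωI
    have ih := ih hωI.1 fun ω' hω'I hω' => by
      simpa using hω (ω' ++ [j]) (by simpa [or_imp, forall_and] using ⟨hω'I, hωI.2⟩)
        (by rw [wordProd_append, wordProd_append, hω'])
    rw [wordProd_append, wordProd_singleton, ← mul_assoc, List.length_append,
      List.length_singleton, ← add_assoc, ← ih]
    refine (cs.length_mul_simple _ j).resolve_right fun hdesc => ?_
    obtain ⟨ρ, hρ, rfl⟩ := cs.exists_isReduced u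
    obtain ⟨k, hk, hexch⟩ := cs.exists_wordProd_mul_simple_eq_eraseIdx (ω := ρ ++ ω) (i := j)
      (by rw [IsRightDescent, wordProd_append]; omega)
    rw [wordProd_append] at hexch
    rcases lt_or_ge k ρ.length with hkρ | hkρ
    · -- deleting a letter of `ρ` stays in the coset of `π ρ`, contradicting minimality
      rw [List.eraseIdx_append_of_lt_length hkρ, wordProd_append] at hexch
      have hcoset : (π ρ : W ⧸ parab cs I) = π (ρ.eraseIdx k) := by
        rw [QuotientGroup.eq, show (π ρ)⁻¹ * π (ρ.eraseIdx k) = π ω * s j * (π ω)⁻¹ by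
          rw [← mul_inv_eq_iff_eq_mul.mpr hexch]; group]
        exact mul_mem (mul_mem (cs.mem_parab_iff.mpr ⟨ω, hωI.1, rfl⟩)
          (Subgroup.subset_closure ⟨j, hωI.2, rfl⟩))
          (inv_mem (cs.mem_parab_iff.mpr ⟨ω, hωI.1, rfl⟩))
      have := cs.minLength_le I hcoset.symm
      have := cs.length_wordProd_le (ρ.eraseIdx k)
      have := List.length_eraseIdx_add_one hkρ
      unfold IsReduced at hρ
      omega
    · -- otherwise a letter of `ω` can be deleted, contradicting the minimality of `ω ++ [j]`
      rw [List.eraseIdx_append_of_length_le hkρ, wordProd_append, mul_assoc] at hexch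
      have hle := hω (ω.eraseIdx (k - ρ.length))
        (fun l hl => hωI.1 l (List.mem_of_mem_eraseIdx hl))
        (by rw [wordProd_append, wordProd_singleton, mul_left_cancel hexch])
      rw [List.length_append, List.length_singleton] at hle
      have := List.length_eraseIdx_le ω (k - ρ.length)
      omega

variable (I) in
theorem minLength_mk_simple_mul_le {a : W} {i : B} (h : cs.IsLeftDescent a i) :
    cs.minLength I ↑(s i * a) ≤ cs.minLength I a := by
  obtain ⟨u, hua, hu⟩ := cs.exists_length_eq_minLength I a
  rw [← QuotientGroup.mk_mul_eq_mk_mul hua]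
  rcases cs.length_simple_mul u i with hup | hdown
  · by_contra! hgt
    -- then `s i * u` is a minimal representative of its coset, and `s i` cannot shorten `a`
    have hmin : ℓ (s i * u) = cs.minLength I ↑(s i * u) :=
      le_antisymm (by omega) (cs.minLength_le I rfl)
    obtain ⟨ω, hωI, hω, hshort⟩ :=
      cs.exists_shortest_word_of_mem_parab (QuotientGroup.eq.mp hua)
    have hlen := cs.length_mul_wordProd_of_minimal hmin hωI (hω ▸ hshort)
    rw [hω, mul_assoc, mul_inv_cancel_left] at hlen
    have hle : ℓ a ≤ ℓ u + ω.length :=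
      calc ℓ a = ℓ (u * π ω) := by rw [hω, mul_inv_cancel_left]
        _ ≤ ℓ u + ℓ (π ω) := cs.length_mul_le _ _
        _ ≤ ℓ u + ω.length := by grw [cs.length_wordProd_le ω]
    unfold IsLeftDescent at h
    omega
  · have := cs.minLength_le I (rfl : ((s i * u : W) : W ⧸ parab cs I) = _)
    omega

theorem isLeftDescent_of_minLength_lt {a : W} {i : B}
    (h : cs.minLength I ↑(s i * a) < cs.minLength I a) : cs.IsLeftDescent a i := by
  by_contra hnot
  have hdesc : cs.IsLeftDescent (s i * a) i := by
    rwa [isLeftDescent_iff_not_isLeftDescent_mul, simple_mul_simple_cancel_left]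
  have := cs.minLength_mk_simple_mul_le I hdesc
  rw [simple_mul_simple_cancel_left] at this
  omega

theorem minLength_foldQplus_simple_le (i : B) (x : W ⧸ parab cs I) :
    cs.minLength I (foldQplus cs I (s i) x) ≤ cs.minLength I x := by
  unfold foldQplus foldWplus
  split_ifs with h
  · simpa using cs.minLength_mk_simple_mul_le I h
  · simp

theorem exists_minLength_foldQplus_simple_lt {x : W ⧸ parab cs I} (hx : x ≠ ↑(1 : W)) :
    ∃ i : B, cs.minLength I (foldQplus cs I (s i) x) < cs.minLength I x := by
  obtain ⟨u, hux, hu⟩ := cs.exists_length_eq_minLength I x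
  obtain ⟨i, hi⟩ := cs.exists_leftDescent_of_ne_one (w := u) (by rintro rfl; exact hx hux.symm)
  have hlt : cs.minLength I ↑(s i * x.out) < cs.minLength I x := by
    rw [← QuotientGroup.mk_mul_eq_mk_mul (hux.trans (QuotientGroup.out_eq' x).symm)]
    have := cs.minLength_le I (rfl : ((s i * u : W) : W ⧸ parab cs I) = _)
    unfold IsLeftDescent at hi
    omega
  have hdesc : ℓ (s i * x.out) < ℓ x.out :=
    cs.isLeftDescent_of_minLength_lt (by rwa [QuotientGroup.out_eq'])
  refine ⟨i, ?_⟩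
  unfold foldQplus foldWplus
  rwa [if_pos hdesc]

end CoxeterSystem

/-- There is a percolating sequence of `W/W_I` starting from the singleton `{W_I}`:
a finite folding sequence `J₀ = {W_I}, J₁, …, J_N = W/W_I`, where each `J_{i+1}` is
`J_i⁺(t_i)` or `J_i⁻(t_i)` for some reflection `t_i`. -/
theorem exists_percolating_sequence [Finite W] (cs : CoxeterSystem M W) (I : Set B) :
    ∃ (N : ℕ) (Js : ℕ → Set (W ⧸ parab cs I)),
      Js 0 = {(QuotientGroup.mk 1 : W ⧸ parab cs I)} ∧ Js N = Set.univ ∧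
      ∀ i < N, ∃ t : W, cs.IsReflection t ∧
        (Js (i + 1) = Jplus cs I t (Js i) ∨ Js (i + 1) = Jminus cs I t (Js i)) := by
  obtain ⟨N, Js, h₀, hN, hstep⟩ := exists_preimage_chain_eq_univ (cs.minLength I)
    (F := Set.range fun i => foldQplus cs I (cs.simple i)) (QuotientGroup.mk 1)
    (by rintro _ ⟨i, rfl⟩ x; exact cs.minLength_foldQplus_simple_le i x)
    (fun x hx => let ⟨i, hi⟩ := cs.exists_minLength_foldQplus_simple_lt hx; ⟨_, ⟨i, rfl⟩, hi⟩)
  refine ⟨N, Js, h₀, hN, fun n hn => ?_⟩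
  obtain ⟨_, ⟨i, rfl⟩, hJ⟩ := hstep n hn
  exact ⟨cs.simple i, cs.isReflection_simple i, Or.inl hJ⟩
end
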